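/- Packing of the second stopping condition: there is an absolute constant C (independent of the dimension d) such that for every g ∈ L¹(J; ℂ^d) with ∫_J ‖g‖_{ℂ^d} > 0, every λ > 0, and every collection {L} of pairwise disjoint dyadic subintervals of J each satisfying Σ_{I∈D : L ⊆ I ⊆ J} ‖(g,h_I)‖²_{ℂ^d} / |I| > λ² · ( |J|^{-1} ∫_J ‖g(y)‖_{ℂ^d} dy )², one has Σ_L |L| ≤ C λ^{-1} |J|. In particular, each such L is contained in the set { x ∈ J : Sg(x) > λ · |J|^{-1} ∫_J ‖g‖_{ℂ^d} }, where Sg(x)² = Σ_{I∈D} ‖(g,h_I)‖²_{ℂ^d} χ_I(x)/|I| is the (unweighted) vector-valued dyadic square function, which is of weak type (1,1) with a universal constant. -/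

import Mathlib

open MeasureTheory Matrix Set ENNReal Filter
open scoped ComplexOrder

noncomputable section

/-- The dyadic interval `[k/2^n, (k+1)/2^n)`. -/
def dyadicI (n k : ℕ) : Set ℝ := Set.Ico ((k : ℝ) / 2 ^ n) (((k : ℝ) + 1) / 2 ^ n)

/-- `I` is a dyadic subinterval of `J = [0,1)`. -/
def IsDyadic (I : Set ℝ) : Prop := ∃ n k : ℕ, k < 2 ^ n ∧ I = dyadicI n k

/-- The length (Lebesgue measure) of a set, as a real number. -/
def len (I : Set ℝ) : ℝ := (volume I).toReal

/-- The `L²`-normalized Haar function of an interval `I = [a, b)`: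
`h_I = |I|^{-1/2} (χ_{I_+} - χ_{I_-})`. -/
def haar (I : Set ℝ) (x : ℝ) : ℝ :=
  (Real.sqrt (len I))⁻¹ *
    ((Set.Ico ((sInf I + sSup I) / 2) (sSup I)).indicator (fun _ => (1 : ℝ)) x
      - (Set.Ico (sInf I) ((sInf I + sSup I) / 2)).indicator (fun _ => (1 : ℝ)) x)

/-- The Haar coefficient `(f, h_I) = ∫_J f h_I ∈ ℂ^d` of a vector-valued function. -/
def haarCoef {d : ℕ} (f : ℝ → Fin d → ℂ) (I : Set ℝ) : Fin d → ℂ :=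
  ∫ x in Set.Ico (0 : ℝ) 1, haar I x • f x

/-- The Euclidean norm on `ℂ^d`. -/
def vnorm {d : ℕ} (v : Fin d → ℂ) : ℝ := Real.sqrt (∑ i, ‖v i‖ ^ 2)

/-- The (real) quadratic form `⟨M v, v⟩` of a matrix. -/
def qf {d : ℕ} (M : Matrix (Fin d) (Fin d) ℂ) (v : Fin d → ℂ) : ℝ :=
  (star v ⬝ᵥ M.mulVec v).re

/-- The entrywise average `⟨W⟩_I = |I|⁻¹ ∫_I W` of a matrix-valued function. -/
def mavg {d : ℕ} (W : ℝ → Matrix (Fin d) (Fin d) ℂ) (I : Set ℝ) :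
    Matrix (Fin d) (Fin d) ℂ :=
  Matrix.of fun i j => (len I : ℂ)⁻¹ * ∫ x in I, W x i j

open scoped Classical in
/-- The positive semidefinite square root of a positive semidefinite matrix
(junk value `0` otherwise). -/
def msqrt {d : ℕ} (M : Matrix (Fin d) (Fin d) ℂ) : Matrix (Fin d) (Fin d) ℂ :=
  if h : M.PosSemidef then
    h.1.eigenvectorUnitary.1 * diagonal ((↑) ∘ (√·) ∘ h.1.eigenvalues) *
      (star h.1.eigenvectorUnitary : Matrix (Fin d) (Fin d) ℂ)
  else 0

/-- The operator norm of a matrix acting on the Euclidean space `ℂ^d`. -/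
def opNorm {d : ℕ} (M : Matrix (Fin d) (Fin d) ℂ) : ℝ :=
  ‖Matrix.toEuclideanCLM (𝕜 := ℂ) M‖

/-- A `d × d` matrix weight on `J = [0,1)`: entrywise integrable and a.e. positive
semidefinite. -/
structure IsMatrixWeight {d : ℕ} (W : ℝ → Matrix (Fin d) (Fin d) ℂ) : Prop where
  integrable : ∀ i j, IntegrableOn (fun x => W x i j) (Set.Ico (0 : ℝ) 1)
  posSemidef : ∀ᵐ x ∂(volume.restrict (Set.Ico (0 : ℝ) 1)), (W x).PosSemidef

/-- Membership `f ∈ L²_{ℂ^d}(W)`: `f` is a.e. strongly measurable on `J = [0,1)` and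
`∫_J ⟨W f, f⟩ < ∞`. -/
def MemL2W {d : ℕ} (W : ℝ → Matrix (Fin d) (Fin d) ℂ) (f : ℝ → Fin d → ℂ) : Prop :=
  AEStronglyMeasurable f (volume.restrict (Set.Ico (0 : ℝ) 1)) ∧
    IntegrableOn (fun x => qf (W x) (f x)) (Set.Ico (0 : ℝ) 1)

/-!
Put `A = ∫_J ‖g‖` and `t = λA`; for `λ < 1` the bound `∑ |L| ≤ |J| ≤ 3/λ` is trivial. Call a dyadic
interval heavy when the average of `‖g‖` over it exceeds `t`. The intervals `L` contained in a heavy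
interval lie in the disjoint maximal heavy intervals, of total length at most `A / t = 1/λ`: the
weak type `(1,1)` bound of the dyadic maximal function. The other intervals `L` only involve Haar
coefficients of intervals contained in no heavy interval. These coincide with the Haar coefficients
of the good part `b` of the Calderón–Zygmund decomposition of `g` at height `t` (taken down to a
finite depth, so that `b` is a step function), and `‖b‖_∞ ≤ 2t`, `‖b‖₁ ≤ A`, so Bessel's inequality
bounds the sum of their squares by `2tA`. Multiplying the stopping condition by `|L|` and summing,
`λ²A² ∑ |L| ≤ ∑_I ‖(g,h_I)‖² |I|⁻¹ ∑_{L ⊆ I} |L| ≤ 2λA²`, so these `L` have total length at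
most `2/λ`, and `C = 3` works. The containment in the level set of `Sg` is immediate, since `Sg(x)²`
dominates the sum over the dyadic intervals containing `L ∋ x`.
-/

lemma mul_measure_biUnion_le {α ι : Type*} [MeasurableSpace α] {μ ν : Measure α} {T : Set ι}
    {s : ι → Set α} (hT : T.Countable) (hd : T.PairwiseDisjoint s)
    (hs : ∀ i ∈ T, MeasurableSet (s i)) {c : ℝ≥0∞} (h : ∀ i ∈ T, c * μ (s i) ≤ ν (s i)) :
    c * μ (⋃ i ∈ T, s i) ≤ ν (⋃ i ∈ T, s i) := by
  rw [measure_biUnion hT hd hs, measure_biUnion hT hd hs, ← ENNReal.tsum_mul_left]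
  exact ENNReal.tsum_le_tsum fun i => h i i.2

open Classical in
lemma tsum_ite_subset_mul_measure_le {α : Type*} [MeasurableSpace α] {μ : Measure α}
    {L : Set (Set α)} (hL : L.Countable) (hd : L.PairwiseDisjoint id)
    (hm : ∀ I ∈ L, MeasurableSet I) {u : Set α} (hu : MeasurableSet u) (a : ℝ≥0∞) :
    ∑' I : L, (if (I : Set α) ⊆ u then a else 0) * μ I ≤ a * μ u := by
  calc ∑' I : L, (if (I : Set α) ⊆ u then a else 0) * μ I ≤ ∑' I : L, a * μ (I ∩ u) :=
        ENNReal.tsum_le_tsum fun I => by split_ifs with h <;> simp [inter_eq_left.2, h]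
    _ = a * μ (⋃ I ∈ L, I ∩ u) := by
        rw [ENNReal.tsum_mul_left, measure_biUnion (f := fun I => I ∩ u) hL
          (hd.mono fun I => inter_subset_left) fun I hI => (hm I hI).inter hu]
    _ ≤ a * μ u := by gcongr; exact iUnion₂_subset fun I _ => inter_subset_right

lemma ofReal_tsum_le_tsum_ofReal {β : Type*} {f : β → ℝ} (hf : ∀ b, 0 ≤ f b) :
    ENNReal.ofReal (∑' b, f b) ≤ ∑' b, ENNReal.ofReal (f b) := by
  by_cases h : Summable f
  · exact (ENNReal.ofReal_tsum_of_nonneg hf h).le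
  · simp [tsum_eq_zero_of_not_summable h]

lemma le_ofReal_div_of_ofReal_mul_le {a b : ℝ} {x : ℝ≥0∞} (ha : 0 < a)
    (h : ENNReal.ofReal a * x ≤ ENNReal.ofReal b) : x ≤ ENNReal.ofReal (b / a) := by
  rw [ENNReal.ofReal_div_of_pos ha, ENNReal.le_div_iff_mul_le (Or.inl (by simpa using ha))
    (Or.inl ENNReal.ofReal_ne_top), mul_comm]
  exact h

lemma norm_toLp_sq {α : Type*} [MeasurableSpace α] {μ : Measure α} {φ : α → ℂ}
    (hφ : MemLp φ 2 μ) : ‖hφ.toLp φ‖ ^ 2 = ∫ x, ‖φ x‖ ^ 2 ∂μ := by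
  rw [← RCLike.ofReal_inj (K := ℂ), RCLike.ofReal_pow, ← inner_self_eq_norm_sq_to_K, L2.inner_def,
    ← integral_ofReal]
  refine integral_congr_ae ?_
  filter_upwards [hφ.coeFn_toLp] with x hx
  rw [hx, inner_self_eq_norm_sq_to_K]
  norm_cast

section StepAverage

variable {α ι E : Type*} [MeasurableSpace α] [NormedAddCommGroup E] [NormedSpace ℝ E]
  {μ : Measure α} {P : Finset ι} {s : ι → Set α}

def stepAverage (μ : Measure α) (P : Finset ι) (s : ι → Set α) (g : α → E) (x : α) : E :=
  ∑ i ∈ P, (s i).indicator (fun _ => ⨍ y in s i, g y ∂μ) x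

lemma stepAverage_eq_of_mem (hP : (P : Set ι).PairwiseDisjoint s) {i : ι} (hi : i ∈ P) {x : α}
    (hx : x ∈ s i) (g : α → E) : stepAverage μ P s g x = ⨍ y in s i, g y ∂μ := by
  rw [stepAverage, Finset.sum_eq_single_of_mem i hi, indicator_of_mem hx]
  intro j hj hji
  exact indicator_of_notMem ((hP hj hi hji).notMem_of_mem_right hx) _

lemma stronglyMeasurable_stepAverage (hs : ∀ i ∈ P, MeasurableSet (s i)) (g : α → E) :
    StronglyMeasurable (stepAverage μ P s g) := by
  unfold stepAverage
  exact Finset.stronglyMeasurable_fun_sum P fun i hi =>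
    (stronglyMeasurable_const (b := ⨍ y in s i, g y ∂μ)).indicator (hs i hi)

lemma setIntegral_smul_stepAverage [CompleteSpace E] {φ : α → ℝ} {g : α → E}
    (hP : (P : Set ι).PairwiseDisjoint s) (hs : ∀ i ∈ P, MeasurableSet (s i))
    (hμ : ∀ i ∈ P, μ (s i) ≠ ∞) (hg : ∀ i ∈ P, IntegrableOn g (s i) μ)
    (hφ : ∀ i ∈ P, ∃ c, ∀ x ∈ s i, φ x = c) :
    ∫ x in ⋃ i ∈ P, s i, φ x • stepAverage μ P s g x ∂μ = ∫ x in ⋃ i ∈ P, s i, φ x • g x ∂μ := by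
  choose! c hc using hφ
  have hstep : ∀ i ∈ P, EqOn (fun x => φ x • stepAverage μ P s g x)
      (fun _ => c i • ⨍ y in s i, g y ∂μ) (s i) := fun i hi x hx => by
    simp only [hc i hi x hx, stepAverage_eq_of_mem hP hi hx]
  have hsmul : ∀ i ∈ P, EqOn (fun x => φ x • g x) (fun x => c i • g x) (s i) :=
    fun i hi x hx => by simp only [hc i hi x hx]
  rw [integral_biUnion_finset P hs hP fun i hi =>
      (integrableOn_const (hμ i hi)).congr_fun (hstep i hi).symm (hs i hi),
    integral_biUnion_finset P hs hP fun i hi =>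
      IntegrableOn.congr_fun ((hg i hi).smul (c i)) (hsmul i hi).symm (hs i hi)]
  refine Finset.sum_congr rfl fun i hi => ?_
  rw [setIntegral_congr_fun (hs i hi) (hstep i hi), setIntegral_congr_fun (hs i hi) (hsmul i hi),
    setIntegral_const, integral_smul, smul_comm, measure_smul_setAverage _ (hμ i hi)]

end StepAverage

section Dyadic

lemma dyadicI_left_lt_right (n k : ℕ) : (k : ℝ) / 2 ^ n < ((k : ℝ) + 1) / 2 ^ n := by
  gcongr; linarith

lemma measurableSet_dyadicI (n k : ℕ) : MeasurableSet (dyadicI n k) := measurableSet_Ico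

lemma volume_dyadicI (n k : ℕ) : volume (dyadicI n k) = ENNReal.ofReal (2 ^ n)⁻¹ := by
  rw [dyadicI, Real.volume_Ico]
  congr 1
  field_simp
  ring

lemma len_dyadicI (n k : ℕ) : len (dyadicI n k) = (2 ^ n)⁻¹ := by
  rw [len, volume_dyadicI, ENNReal.toReal_ofReal (by positivity)]

lemma len_dyadicI_pos (n k : ℕ) : 0 < len (dyadicI n k) := by
  rw [len_dyadicI]; positivity

lemma volume_real_dyadicI (n k : ℕ) : volume.real (dyadicI n k) = len (dyadicI n k) := rfl

lemma ofReal_len_dyadicI (n k : ℕ) :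
    ENNReal.ofReal (len (dyadicI n k)) = volume (dyadicI n k) := by
  rw [len_dyadicI, volume_dyadicI]

lemma len_Ico_zero_one : len (Ico (0 : ℝ) 1) = 1 := by
  simp [len]

lemma dyadicI_zero_zero : dyadicI 0 0 = Ico 0 1 := by
  simp [dyadicI]

lemma dyadicI_subset_Ico_zero_one {n k : ℕ} (hk : k < 2 ^ n) : dyadicI n k ⊆ Ico 0 1 := by
  refine Ico_subset_Ico (by positivity) ?_
  rw [div_le_one (by positivity)]
  exact_mod_cast hk

lemma dyadicI_subset_dyadicI_iff {m j n k : ℕ} :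
    dyadicI m j ⊆ dyadicI n k ↔ n ≤ m ∧ j / 2 ^ (m - n) = k := by
  rw [dyadicI, dyadicI, Ico_subset_Ico_iff (dyadicI_left_lt_right m j),
    div_le_div_iff₀ (by positivity) (by positivity),
    div_le_div_iff₀ (by positivity) (by positivity)]
  norm_cast
  constructor
  · rintro ⟨h₁, h₂⟩
    have hnm : n ≤ m := (Nat.pow_le_pow_iff_right one_lt_two).1 (by nlinarith)
    obtain ⟨e, rfl⟩ := Nat.exists_eq_add_of_le hnm
    rw [pow_add] at h₁ h₂
    rw [Nat.add_sub_cancel_left]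
    exact ⟨hnm, Nat.div_eq_of_lt_le
      (Nat.le_of_mul_le_mul_right (c := 2 ^ n) (by linarith) (by positivity))
      (Nat.le_of_mul_le_mul_right (c := 2 ^ n) (by linarith) (by positivity))⟩
  · rintro ⟨hnm, rfl⟩
    obtain ⟨e, rfl⟩ := Nat.exists_eq_add_of_le hnm
    rw [Nat.add_sub_cancel_left, pow_add]
    have hlo := Nat.mul_le_mul_right (2 ^ n) (Nat.div_mul_le_self j (2 ^ e))
    have hhi := Nat.mul_le_mul_right (2 ^ n) (Nat.lt_mul_div_succ j (pow_pos two_pos e))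
    constructor <;> linarith

lemma disjoint_dyadicI_of_lt {n j k : ℕ} (h : j < k) : Disjoint (dyadicI n j) (dyadicI n k) := by
  refine Set.disjoint_of_subset_right (Ico_subset_Ico_left ?_) Ico_disjoint_Ico_same
  gcongr
  exact_mod_cast h

lemma disjoint_dyadicI_of_ne {n j k : ℕ} (h : j ≠ k) : Disjoint (dyadicI n j) (dyadicI n k) := by
  rcases h.lt_or_gt with h | h
  · exact disjoint_dyadicI_of_lt h
  · exact (disjoint_dyadicI_of_lt h).symm

lemma dyadicI_subset_or_disjoint {m j n k : ℕ} (h : n ≤ m) :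
    dyadicI m j ⊆ dyadicI n k ∨ Disjoint (dyadicI m j) (dyadicI n k) := by
  by_cases hk : j / 2 ^ (m - n) = k
  · exact Or.inl (dyadicI_subset_dyadicI_iff.2 ⟨h, hk⟩)
  · exact Or.inr ((disjoint_dyadicI_of_ne hk).mono_left (dyadicI_subset_dyadicI_iff.2 ⟨h, rfl⟩))

lemma dyadicI_inj {n k m j : ℕ} (h : dyadicI n k = dyadicI m j) : n = m ∧ k = j := by
  obtain ⟨hmn, hj⟩ := dyadicI_subset_dyadicI_iff.1 h.le
  obtain ⟨hnm, -⟩ := dyadicI_subset_dyadicI_iff.1 h.ge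
  obtain rfl := le_antisymm hnm hmn
  simpa using hj

lemma lt_of_dyadicI_ssubset {m j n k : ℕ} (h : dyadicI m j ⊆ dyadicI n k)
    (hne : dyadicI m j ≠ dyadicI n k) : n < m := by
  obtain ⟨hnm, hk⟩ := dyadicI_subset_dyadicI_iff.1 h
  refine hnm.lt_of_ne ?_
  rintro rfl
  simp_all

lemma lt_two_pow_of_dyadicI_subset {n k m j : ℕ} (hk : k < 2 ^ n)
    (h : dyadicI n k ⊆ dyadicI m j) : j < 2 ^ m := by
  obtain ⟨hmn, rfl⟩ := dyadicI_subset_dyadicI_iff.1 h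
  rw [Nat.div_lt_iff_lt_mul (by positivity), ← pow_add, Nat.add_sub_cancel' hmn]
  exact hk

lemma dyadicI_eq_union (n k : ℕ) :
    dyadicI n k = dyadicI (n + 1) (2 * k) ∪ dyadicI (n + 1) (2 * k + 1) := by
  have hmid : ((2 * k : ℕ) : ℝ) + 1 = ((2 * k + 1 : ℕ) : ℝ) := by push_cast; ring
  rw [dyadicI, dyadicI, dyadicI, hmid, Ico_union_Ico_eq_Ico (by gcongr; linarith)
    (by gcongr; linarith)]
  congr 1 <;> (push_cast; field_simp; ring)

lemma dyadicI_succ_subset_left (n k : ℕ) : dyadicI (n + 1) (2 * k) ⊆ dyadicI n k :=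
  (dyadicI_eq_union n k).symm ▸ subset_union_left

lemma dyadicI_succ_subset_right (n k : ℕ) : dyadicI (n + 1) (2 * k + 1) ⊆ dyadicI n k :=
  (dyadicI_eq_union n k).symm ▸ subset_union_right

lemma exists_mem_dyadicI {x : ℝ} (hx : x ∈ Ico (0 : ℝ) 1) (N : ℕ) :
    ∃ q < 2 ^ N, x ∈ dyadicI N q := by
  have h2N : (0 : ℝ) < 2 ^ N := by positivity
  refine ⟨⌊x * 2 ^ N⌋₊, Nat.floor_lt' (by positivity) |>.2 ?_, ?_, ?_⟩
  · push_cast; nlinarith [hx.2]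
  · rw [div_le_iff₀ h2N]; exact Nat.floor_le (by nlinarith [hx.1])
  · rw [lt_div_iff₀ h2N]; exact Nat.lt_floor_add_one _

lemma IsDyadic.measurableSet {I : Set ℝ} (hI : IsDyadic I) : MeasurableSet I := by
  obtain ⟨n, k, -, rfl⟩ := hI
  exact measurableSet_dyadicI n k

lemma IsDyadic.subset_Ico_zero_one {I : Set ℝ} (hI : IsDyadic I) : I ⊆ Ico 0 1 := by
  obtain ⟨n, k, hk, rfl⟩ := hI
  exact dyadicI_subset_Ico_zero_one hk

lemma countable_of_isDyadic {L : Set (Set ℝ)} (hL : ∀ I ∈ L, IsDyadic I) : L.Countable :=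
  (countable_range fun p : ℕ × ℕ => dyadicI p.1 p.2).mono fun I hI => by
    obtain ⟨n, k, -, rfl⟩ := hL I hI
    exact ⟨(n, k), rfl⟩

end Dyadic

section Haar

lemma haar_dyadicI (n k : ℕ) (x : ℝ) :
    haar (dyadicI n k) x = √(2 ^ n) *
      ((dyadicI (n + 1) (2 * k + 1)).indicator 1 x - (dyadicI (n + 1) (2 * k)).indicator 1 x) := by
  have hmid : ((k : ℝ) / 2 ^ n + ((k : ℝ) + 1) / 2 ^ n) / 2
      = ((2 * k + 1 : ℕ) : ℝ) / 2 ^ (n + 1) := by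
    push_cast; field_simp; ring
  have hright : Ico (((2 * k + 1 : ℕ) : ℝ) / 2 ^ (n + 1)) (((k : ℝ) + 1) / 2 ^ n)
      = dyadicI (n + 1) (2 * k + 1) := by
    rw [dyadicI]; congr 1; push_cast; field_simp; ring
  have hleft : Ico ((k : ℝ) / 2 ^ n) (((2 * k + 1 : ℕ) : ℝ) / 2 ^ (n + 1))
      = dyadicI (n + 1) (2 * k) := by
    rw [dyadicI]
    congr 1
    · push_cast; field_simp; ring
    · push_cast; ring
  rw [haar, len_dyadicI, Real.sqrt_inv, inv_inv, dyadicI, csInf_Ico (dyadicI_left_lt_right n k),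
    csSup_Ico (dyadicI_left_lt_right n k), hmid, hright, hleft]
  rfl

lemma haar_dyadicI_of_notMem {n k : ℕ} {x : ℝ} (hx : x ∉ dyadicI n k) :
    haar (dyadicI n k) x = 0 := by
  rw [haar_dyadicI, indicator_of_notMem (fun h => hx (dyadicI_succ_subset_right n k h)),
    indicator_of_notMem (fun h => hx (dyadicI_succ_subset_left n k h))]
  ring

lemma haar_dyadicI_of_mem_left {n k : ℕ} {x : ℝ} (hx : x ∈ dyadicI (n + 1) (2 * k)) :
    haar (dyadicI n k) x = -√(2 ^ n) := by
  rw [haar_dyadicI, indicator_of_mem hx,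
    indicator_of_notMem ((disjoint_dyadicI_of_lt (Nat.lt_succ_self _)).notMem_of_mem_left hx)]
  simp

lemma haar_dyadicI_of_mem_right {n k : ℕ} {x : ℝ} (hx : x ∈ dyadicI (n + 1) (2 * k + 1)) :
    haar (dyadicI n k) x = √(2 ^ n) := by
  rw [haar_dyadicI, indicator_of_mem hx,
    indicator_of_notMem ((disjoint_dyadicI_of_lt (Nat.lt_succ_self _)).notMem_of_mem_right hx)]
  simp

lemma haar_dyadicI_sq (n k : ℕ) (x : ℝ) :
    haar (dyadicI n k) x ^ 2 = 2 ^ n * (dyadicI n k).indicator 1 x := by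
  by_cases hx : x ∈ dyadicI n k
  · rw [indicator_of_mem hx]
    rcases (dyadicI_eq_union n k ▸ hx : x ∈ _ ∪ _) with h | h
    · rw [haar_dyadicI_of_mem_left h, neg_sq, Real.sq_sqrt (by positivity)]; simp
    · rw [haar_dyadicI_of_mem_right h, Real.sq_sqrt (by positivity)]; simp
  · rw [haar_dyadicI_of_notMem hx, indicator_of_notMem hx]
    simp

lemma abs_haar_dyadicI_le (n k : ℕ) (x : ℝ) : |haar (dyadicI n k) x| ≤ √(2 ^ n) := by
  rw [← Real.sqrt_sq_eq_abs, haar_dyadicI_sq]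
  gcongr
  by_cases hx : x ∈ dyadicI n k <;> simp [hx]

lemma measurable_haar (I : Set ℝ) : Measurable (haar I) :=
  measurable_const.mul ((measurable_const.indicator measurableSet_Ico).sub
    (measurable_const.indicator measurableSet_Ico))

lemma exists_haar_dyadicI_eq_const {n m : ℕ} (k j : ℕ) (h : n < m) :
    ∃ c, ∀ x ∈ dyadicI m j, haar (dyadicI n k) x = c := by
  rcases dyadicI_subset_or_disjoint (n := n + 1) (k := 2 * k) (j := j) h with hl | hl
  · exact ⟨_, fun x hx => haar_dyadicI_of_mem_left (hl hx)⟩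
  rcases dyadicI_subset_or_disjoint (n := n + 1) (k := 2 * k + 1) (j := j) h with hr | hr
  · exact ⟨_, fun x hx => haar_dyadicI_of_mem_right (hr hx)⟩
  refine ⟨0, fun x hx => haar_dyadicI_of_notMem fun hx' => ?_⟩
  rcases (dyadicI_eq_union n k ▸ hx' : x ∈ _ ∪ _) with h' | h'
  · exact hl.notMem_of_mem_left hx h'
  · exact hr.notMem_of_mem_left hx h'

end Haar

section HaarSystem

local notation "μJ" => volume.restrict (Ico (0 : ℝ) 1)

lemma integral_indicator_dyadicI {n k : ℕ} (hk : k < 2 ^ n) :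
    ∫ x in Ico (0 : ℝ) 1, (dyadicI n k).indicator 1 x = len (dyadicI n k) := by
  rw [integral_indicator_one (measurableSet_dyadicI n k), Measure.real,
    Measure.restrict_apply (measurableSet_dyadicI n k),
    inter_eq_self_of_subset_left (dyadicI_subset_Ico_zero_one hk), len]

lemma integrableOn_indicator_dyadicI (n k : ℕ) :
    IntegrableOn ((dyadicI n k).indicator (1 : ℝ → ℝ)) (Ico 0 1) :=
  (integrable_const (1 : ℝ)).indicator (measurableSet_dyadicI n k)

lemma integral_haar_dyadicI {n k : ℕ} (hk : k < 2 ^ n) :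
    ∫ x in Ico (0 : ℝ) 1, haar (dyadicI n k) x = 0 := by
  simp only [haar_dyadicI]
  rw [integral_const_mul, integral_sub (integrableOn_indicator_dyadicI _ _)
    (integrableOn_indicator_dyadicI _ _), integral_indicator_dyadicI (by omega),
    integral_indicator_dyadicI (by omega), len_dyadicI, len_dyadicI, sub_self, mul_zero]

lemma integral_haar_dyadicI_sq {n k : ℕ} (hk : k < 2 ^ n) :
    ∫ x in Ico (0 : ℝ) 1, haar (dyadicI n k) x ^ 2 = 1 := by
  simp only [haar_dyadicI_sq]
  rw [integral_const_mul, integral_indicator_dyadicI hk, len_dyadicI]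
  field_simp

lemma integral_haar_dyadicI_mul_of_ne {n j k : ℕ} (h : j ≠ k) :
    ∫ x in Ico (0 : ℝ) 1, haar (dyadicI n j) x * haar (dyadicI n k) x = 0 := by
  refine integral_eq_zero_of_ae (Eventually.of_forall fun x => ?_)
  by_cases hx : x ∈ dyadicI n j
  · simp [haar_dyadicI_of_notMem ((disjoint_dyadicI_of_ne h).notMem_of_mem_left hx)]
  · simp [haar_dyadicI_of_notMem hx]

lemma integral_haar_dyadicI_mul_of_lt {n k m j : ℕ} (hj : j < 2 ^ m) (h : n < m) :
    ∫ x in Ico (0 : ℝ) 1, haar (dyadicI n k) x * haar (dyadicI m j) x = 0 := by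
  obtain ⟨c, hc⟩ := exists_haar_dyadicI_eq_const k j h
  have hprod : ∀ x, haar (dyadicI n k) x * haar (dyadicI m j) x = c * haar (dyadicI m j) x := by
    intro x
    by_cases hx : x ∈ dyadicI m j
    · rw [hc x hx]
    · simp [haar_dyadicI_of_notMem hx]
  simp only [hprod, integral_const_mul, integral_haar_dyadicI hj, mul_zero]

abbrev DyadicIndex := Σ n : ℕ, Fin (2 ^ n)

lemma memLp_haar_dyadicI (n k : ℕ) : MemLp (fun x => (haar (dyadicI n k) x : ℂ)) 2 μJ :=
  MemLp.of_bound (Complex.measurable_ofReal.comp (measurable_haar _)).aestronglyMeasurable _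
    (Eventually.of_forall fun x => by rw [Complex.norm_real]; exact abs_haar_dyadicI_le n k x)

def haarLp (p : DyadicIndex) : Lp ℂ 2 μJ := (memLp_haar_dyadicI p.1 p.2).toLp _

lemma inner_haarLp_toLp (p : DyadicIndex) {φ : ℝ → ℂ} (hφ : MemLp φ 2 μJ) :
    inner ℂ (haarLp p) (hφ.toLp φ)
      = ∫ x in Ico (0 : ℝ) 1, (haar (dyadicI p.1 p.2) x : ℂ) * φ x := by
  rw [L2.inner_def]
  refine integral_congr_ae ?_
  filter_upwards [(memLp_haar_dyadicI p.1 p.2).coeFn_toLp, hφ.coeFn_toLp] with x h₁ h₂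
  rw [RCLike.inner_apply, haarLp, h₁, h₂, Complex.conj_ofReal, mul_comm]

lemma orthonormal_haarLp : Orthonormal ℂ haarLp := by
  classical
  rw [orthonormal_iff_ite]
  rintro ⟨n, k⟩ ⟨m, j⟩
  rw [show inner ℂ (haarLp ⟨n, k⟩) (haarLp ⟨m, j⟩) = _ from
    inner_haarLp_toLp _ (memLp_haar_dyadicI m j)]
  simp only [← Complex.ofReal_mul, integral_complex_ofReal]
  split_ifs with h
  · cases h
    simp [← sq, integral_haar_dyadicI_sq k.isLt]
  rcases lt_trichotomy n m with hnm | rfl | hnm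
  · simp [integral_haar_dyadicI_mul_of_lt j.isLt hnm]
  · have hjk : (k : ℕ) ≠ j := fun e => h (by rw [Fin.ext e])
    simp [integral_haar_dyadicI_mul_of_ne hjk]
  · simp [mul_comm (haar (dyadicI n k) _), integral_haar_dyadicI_mul_of_lt k.isLt hnm]

lemma sum_norm_integral_haar_mul_sq_le {φ : ℝ → ℂ} (hφ : MemLp φ 2 μJ) (F : Finset DyadicIndex) :
    ∑ p ∈ F, ‖∫ x in Ico (0 : ℝ) 1, (haar (dyadicI p.1 p.2) x : ℂ) * φ x‖ ^ 2
      ≤ ∫ x in Ico (0 : ℝ) 1, ‖φ x‖ ^ 2 := by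
  simpa only [inner_haarLp_toLp _ hφ, norm_toLp_sq hφ] using
    orthonormal_haarLp.sum_inner_products_le (s := F) (hφ.toLp φ)

end HaarSystem

section VNorm

variable {d : ℕ}

lemma vnorm_eq_norm (v : Fin d → ℂ) : vnorm v = ‖(EuclideanSpace.equiv (Fin d) ℂ).symm v‖ := by
  rw [EuclideanSpace.norm_eq]
  rfl

lemma vnorm_nonneg (v : Fin d → ℂ) : 0 ≤ vnorm v := Real.sqrt_nonneg _

lemma vnorm_sq (v : Fin d → ℂ) : vnorm v ^ 2 = ∑ i, ‖v i‖ ^ 2 :=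
  Real.sq_sqrt (by positivity)

lemma norm_apply_le_vnorm (v : Fin d → ℂ) (i : Fin d) : ‖v i‖ ≤ vnorm v := by
  rw [vnorm_eq_norm]
  exact PiLp.norm_apply_le ((EuclideanSpace.equiv (Fin d) ℂ).symm v) i

lemma vnorm_smul (c : ℝ) (v : Fin d → ℂ) : vnorm (c • v) = |c| * vnorm v := by
  rw [vnorm_eq_norm, vnorm_eq_norm, ← Real.norm_eq_abs, ← norm_smul]
  rfl

variable {α : Type*} [MeasurableSpace α] {μ : Measure α} {f : α → Fin d → ℂ}

lemma Integrable.vnorm (hf : Integrable f μ) : Integrable (fun x => vnorm (f x)) μ := by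
  simp_rw [vnorm_eq_norm]
  exact ((EuclideanSpace.equiv (Fin d) ℂ).symm.toContinuousLinearMap.integrable_comp hf).norm

lemma vnorm_integral_le : vnorm (∫ x, f x ∂μ) ≤ ∫ x, vnorm (f x) ∂μ := by
  simp_rw [vnorm_eq_norm, ← (EuclideanSpace.equiv (Fin d) ℂ).symm.integral_comp_comm]
  exact norm_integral_le_integral_norm _

lemma vnorm_setAverage_le (s : Set α) :
    vnorm (⨍ x in s, f x ∂μ) ≤ (μ.real s)⁻¹ * ∫ x in s, vnorm (f x) ∂μ := by
  rw [setAverage_eq, vnorm_smul, abs_of_nonneg (by positivity)]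
  gcongr
  exact vnorm_integral_le

end VNorm

section HaarCoefficients

variable {d : ℕ}

lemma integrableOn_haar_dyadicI_smul {E : Type*} [NormedAddCommGroup E] [NormedSpace ℝ E]
    {f : ℝ → E} {s : Set ℝ} (hf : IntegrableOn f s) (n k : ℕ) :
    IntegrableOn (fun x => haar (dyadicI n k) x • f x) s :=
  hf.bdd_smul _ (measurable_haar _).aestronglyMeasurable
    (Eventually.of_forall fun x => (abs_haar_dyadicI_le n k x))

lemma haarCoef_apply {f : ℝ → Fin d → ℂ} (hf : IntegrableOn f (Ico 0 1)) (n k : ℕ) (i : Fin d) :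
    haarCoef f (dyadicI n k) i = ∫ x in Ico (0 : ℝ) 1, (haar (dyadicI n k) x : ℂ) * f x i := by
  rw [haarCoef, eval_integral (integrable_pi_iff.1 (integrableOn_haar_dyadicI_smul hf n k))]
  simp [Complex.real_smul]

lemma sum_vnorm_haarCoef_sq_le_integral {f : ℝ → Fin d → ℂ}
    (hf : ∀ i, MemLp (fun x => f x i) 2 (volume.restrict (Ico 0 1))) (F : Finset DyadicIndex) :
    ∑ p ∈ F, vnorm (haarCoef f (dyadicI p.1 p.2)) ^ 2 ≤ ∫ x in Ico (0 : ℝ) 1, vnorm (f x) ^ 2 := by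
  have hint : IntegrableOn f (Ico 0 1) := Integrable.of_eval fun i => (hf i).integrable one_le_two
  simp_rw [vnorm_sq]
  rw [integral_finsetSum _ fun i _ => (hf i).integrable_norm_pow two_ne_zero, Finset.sum_comm]
  gcongr with i
  simp_rw [haarCoef_apply hint]
  exact sum_norm_integral_haar_mul_sq_le (hf i) F

end HaarCoefficients

section Heavy

variable {d : ℕ} (g : ℝ → Fin d → ℂ) (t : ℝ)

def Heavy (n k : ℕ) : Prop :=
  t * len (dyadicI n k) < ∫ x in dyadicI n k, vnorm (g x)

def MaximalHeavy (n k : ℕ) : Prop :=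
  Heavy g t n k ∧
    ∀ m j, dyadicI n k ⊆ dyadicI m j → dyadicI n k ≠ dyadicI m j → ¬Heavy g t m j

def BelowHeavy (I : Set ℝ) : Prop :=
  ∃ m j, I ⊆ dyadicI m j ∧ Heavy g t m j

variable {g t}

lemma exists_maximalHeavy {n k : ℕ} (hk : k < 2 ^ n) (h : Heavy g t n k) :
    ∃ m j, j < 2 ^ m ∧ dyadicI n k ⊆ dyadicI m j ∧ MaximalHeavy g t m j := by
  induction n using Nat.strong_induction_on generalizing k with
  | _ n ih =>
    by_cases hmax : MaximalHeavy g t n k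
    · exact ⟨n, k, hk, subset_rfl, hmax⟩
    obtain ⟨m, j, hsub, hne, hm⟩ : ∃ m j, dyadicI n k ⊆ dyadicI m j ∧
        dyadicI n k ≠ dyadicI m j ∧ Heavy g t m j := by
      simpa [MaximalHeavy, h] using hmax
    obtain ⟨m', j', hj', hsub', hmax'⟩ :=
      ih m (lt_of_dyadicI_ssubset hsub hne) (lt_two_pow_of_dyadicI_subset hk hsub) hm
    exact ⟨m', j', hj', hsub.trans hsub', hmax'⟩

lemma MaximalHeavy.disjoint {n k m j : ℕ} (h₁ : MaximalHeavy g t n k)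
    (h₂ : MaximalHeavy g t m j) (hne : (n, k) ≠ (m, j)) :
    Disjoint (dyadicI n k) (dyadicI m j) := by
  have hne' : dyadicI n k ≠ dyadicI m j := fun h =>
    hne (by rw [(dyadicI_inj h).1, (dyadicI_inj h).2])
  rcases le_total n m with hnm | hmn
  · rcases dyadicI_subset_or_disjoint (j := j) (k := k) hnm with hs | hd
    · exact absurd h₁.1 (h₂.2 n k hs hne'.symm)
    · exact hd.symm
  · rcases dyadicI_subset_or_disjoint (j := k) (k := j) hmn with hs | hd
    · exact absurd h₂.1 (h₁.2 m j hs hne')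
    · exact hd

lemma not_heavy_zero_zero (ht : ∫ x in Ico (0 : ℝ) 1, vnorm (g x) ≤ t) : ¬Heavy g t 0 0 := by
  simpa [Heavy, dyadicI_zero_zero, len_Ico_zero_one] using ht

/-- The parent of a maximal heavy interval is not heavy. -/
lemma MaximalHeavy.setIntegral_vnorm_le (hg : IntegrableOn g (Ico 0 1)) (h0 : ¬Heavy g t 0 0)
    {m j : ℕ} (hj : j < 2 ^ m) (h : MaximalHeavy g t m j) :
    ∫ x in dyadicI m j, vnorm (g x) ≤ 2 * t * len (dyadicI m j) := by
  obtain _ | m := m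
  · obtain rfl : j = 0 := by simpa using hj
    exact absurd h.1 h0
  have hsub : dyadicI (m + 1) j ⊆ dyadicI m (j / 2) :=
    dyadicI_subset_dyadicI_iff.2 ⟨m.le_succ, by simp⟩
  have hne : dyadicI (m + 1) j ≠ dyadicI m (j / 2) := fun h => by simpa using (dyadicI_inj h).1
  have hparent := not_lt.1 (h.2 m (j / 2) hsub hne)
  have hmono : ∫ x in dyadicI (m + 1) j, vnorm (g x) ≤ ∫ x in dyadicI m (j / 2), vnorm (g x) :=
    setIntegral_mono_set (Integrable.vnorm (hg.mono_set (dyadicI_subset_Ico_zero_one (by omega))))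
      (Eventually.of_forall fun x => vnorm_nonneg _) (Eventually.of_forall hsub)
  calc _ ≤ _ := hmono
    _ ≤ t * len (dyadicI m (j / 2)) := hparent
    _ = 2 * t * len (dyadicI (m + 1) j) := by
      rw [len_dyadicI, len_dyadicI, pow_succ]; field_simp

/-- The union of the maximal heavy intervals is the level set `{M g > t}` of the dyadic maximal
function of `‖g‖`; this is its weak type `(1,1)` bound. -/
lemma ofReal_mul_volume_maximalHeavy_le (hg : IntegrableOn g (Ico 0 1)) :
    ENNReal.ofReal t *
        volume (⋃ p ∈ {p : ℕ × ℕ | p.2 < 2 ^ p.1 ∧ MaximalHeavy g t p.1 p.2}, dyadicI p.1 p.2)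
      ≤ ENNReal.ofReal (∫ x in Ico (0 : ℝ) 1, vnorm (g x)) := by
  set ν := volume.withDensity fun x => ENNReal.ofReal (vnorm (g x))
  have hν : ∀ s ⊆ Ico (0 : ℝ) 1, MeasurableSet s → ν s = ENNReal.ofReal (∫ x in s, vnorm (g x)) :=
    fun s hs hsm => by
      rw [withDensity_apply _ hsm, ofReal_integral_eq_lintegral_ofReal
        (Integrable.vnorm (hg.mono_set hs)) (Eventually.of_forall fun _ => vnorm_nonneg _)]
  refine (mul_measure_biUnion_le (Set.to_countable _) ?_ (fun p _ => measurableSet_dyadicI _ _)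
    (ν := ν) ?_).trans ?_
  · rintro p hp q hq hpq
    exact hp.2.disjoint hq.2 hpq
  · rintro ⟨n, k⟩ ⟨hk, hmax⟩
    rw [hν _ (dyadicI_subset_Ico_zero_one hk) (measurableSet_dyadicI n k),
      ← ofReal_len_dyadicI, ← ENNReal.ofReal_mul' (len_dyadicI_pos n k).le]
    exact ENNReal.ofReal_le_ofReal hmax.1.le
  · rw [← hν _ subset_rfl measurableSet_Ico]
    exact measure_mono (iUnion₂_subset fun p hp => dyadicI_subset_Ico_zero_one hp.1)

end Heavy

section CalderonZygmund

variable {d : ℕ} {g : ℝ → Fin d → ℂ} {t : ℝ} {N : ℕ}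

open Classical in
variable (g t) in
def czCells (N : ℕ) : Finset (ℕ × ℕ) :=
  {p ∈ Finset.range (N + 1) ×ˢ Finset.range (2 ^ N) |
    p.2 < 2 ^ p.1 ∧ (MaximalHeavy g t p.1 p.2 ∨ p.1 = N ∧ ¬BelowHeavy g t (dyadicI N p.2))}

lemma mem_czCells {p : ℕ × ℕ} :
    p ∈ czCells g t N ↔ p.1 ≤ N ∧ p.2 < 2 ^ p.1 ∧
      (MaximalHeavy g t p.1 p.2 ∨ p.1 = N ∧ ¬BelowHeavy g t (dyadicI N p.2)) := by
  simp only [czCells, Finset.mem_filter, Finset.mem_product, Finset.mem_range, Nat.lt_succ_iff]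
  exact ⟨fun ⟨⟨h₁, _⟩, h⟩ => ⟨h₁, h⟩,
    fun ⟨h₁, h₂, h⟩ => ⟨⟨h₁, h₂.trans_le (Nat.pow_le_pow_right two_pos h₁)⟩, h₂, h⟩⟩

lemma pairwiseDisjoint_czCells :
    (czCells g t N : Set (ℕ × ℕ)).PairwiseDisjoint fun p => dyadicI p.1 p.2 := by
  have key : ∀ {m j q}, MaximalHeavy g t m j → m ≤ N → ¬BelowHeavy g t (dyadicI N q) →
      Disjoint (dyadicI N q) (dyadicI m j) := fun hmax hm hq =>
    (dyadicI_subset_or_disjoint hm).resolve_left fun hs => hq ⟨_, _, hs, hmax.1⟩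
  rintro ⟨m, j⟩ hmj ⟨m', j'⟩ hmj' hne
  obtain ⟨hm, -, hp | ⟨hmN, hp⟩⟩ := mem_czCells.1 hmj <;>
    obtain ⟨hm', -, hq | ⟨hmN', hq⟩⟩ := mem_czCells.1 hmj' <;> dsimp only at *
  · exact hp.disjoint hq hne
  · subst hmN'; exact (key hp hm hq).symm
  · subst hmN; exact key hq hm' hp
  · subst hmN hmN'; exact disjoint_dyadicI_of_ne fun h => hne (Prod.ext rfl h)

lemma biUnion_czCells : ⋃ p ∈ czCells g t N, dyadicI p.1 p.2 = Ico 0 1 := by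
  refine (iUnion₂_subset fun p hp => dyadicI_subset_Ico_zero_one (mem_czCells.1 hp).2.1).antisymm
    fun x hx => mem_iUnion₂.2 ?_
  obtain ⟨q, hq, hxq⟩ := exists_mem_dyadicI hx N
  by_cases hb : BelowHeavy g t (dyadicI N q)
  · obtain ⟨m', j', hsub, hheavy⟩ := hb
    obtain ⟨m, j, hj, hsub', hmax⟩ :=
      exists_maximalHeavy (lt_two_pow_of_dyadicI_subset hq hsub) hheavy
    exact ⟨(m, j), mem_czCells.2 ⟨(dyadicI_subset_dyadicI_iff.1 (hsub.trans hsub')).1, hj,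
      Or.inl hmax⟩, hsub' (hsub hxq)⟩
  · exact ⟨(N, q), mem_czCells.2 ⟨le_rfl, hq, Or.inr ⟨rfl, hb⟩⟩, hxq⟩

lemma setIntegral_vnorm_le_of_mem_czCells (hg : IntegrableOn g (Ico 0 1)) (h0 : ¬Heavy g t 0 0)
    {p : ℕ × ℕ} (hp : p ∈ czCells g t N) :
    ∫ x in dyadicI p.1 p.2, vnorm (g x) ≤ 2 * t * len (dyadicI p.1 p.2) := by
  obtain ⟨-, hk, hmax | ⟨rfl, hb⟩⟩ := mem_czCells.1 hp
  · exact hmax.setIntegral_vnorm_le hg h0 hk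
  · have hlight : ¬Heavy g t p.1 p.2 := fun h => hb ⟨_, _, subset_rfl, h⟩
    have := setIntegral_nonneg (μ := volume) (measurableSet_dyadicI p.1 p.2)
      fun x _ => vnorm_nonneg (g x)
    have := len_dyadicI_pos p.1 p.2
    rw [Heavy, not_lt] at hlight
    nlinarith

lemma exists_haar_dyadicI_eq_const_of_mem_czCells {n k : ℕ} (hn : n < N)
    (hk : ¬BelowHeavy g t (dyadicI n k)) {p : ℕ × ℕ} (hp : p ∈ czCells g t N) :
    ∃ c, ∀ x ∈ dyadicI p.1 p.2, haar (dyadicI n k) x = c := by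
  rcases lt_or_ge n p.1 with h | h
  · exact exists_haar_dyadicI_eq_const k p.2 h
  obtain ⟨-, -, hmax | ⟨hN, -⟩⟩ := mem_czCells.1 hp
  · rcases dyadicI_subset_or_disjoint (j := k) (k := p.2) h with hs | hd
    · exact absurd ⟨_, _, hs, hmax.1⟩ hk
    · exact ⟨0, fun x hx => haar_dyadicI_of_notMem (hd.notMem_of_mem_right hx)⟩
  · omega

variable (g t N) in
def czGoodPart : ℝ → Fin d → ℂ :=
  stepAverage volume (czCells g t N) (fun p => dyadicI p.1 p.2) g

lemma czGoodPart_eq {p : ℕ × ℕ} (hp : p ∈ czCells g t N) {x : ℝ} (hx : x ∈ dyadicI p.1 p.2) :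
    czGoodPart g t N x = ⨍ y in dyadicI p.1 p.2, g y :=
  stepAverage_eq_of_mem pairwiseDisjoint_czCells hp hx g

lemma vnorm_czGoodPart_le (hg : IntegrableOn g (Ico 0 1)) (h0 : ¬Heavy g t 0 0) {x : ℝ}
    (hx : x ∈ Ico (0 : ℝ) 1) : vnorm (czGoodPart g t N x) ≤ 2 * t := by
  rw [← biUnion_czCells (g := g) (t := t) (N := N), mem_iUnion₂] at hx
  obtain ⟨p, hp, hxp⟩ := hx
  rw [czGoodPart_eq hp hxp]
  refine (vnorm_setAverage_le _).trans ?_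
  rw [volume_real_dyadicI, inv_mul_le_iff₀ (len_dyadicI_pos p.1 p.2), mul_comm]
  exact setIntegral_vnorm_le_of_mem_czCells hg h0 hp

lemma memLp_czGoodPart_apply (hg : IntegrableOn g (Ico 0 1)) (h0 : ¬Heavy g t 0 0) (i : Fin d) :
    MemLp (fun x => czGoodPart g t N x i) 2 (volume.restrict (Ico 0 1)) := by
  have hmeas : StronglyMeasurable fun x => czGoodPart g t N x i :=
    (continuous_apply i).comp_stronglyMeasurable
      (stronglyMeasurable_stepAverage (fun _ _ => measurableSet_dyadicI _ _) g)
  exact MemLp.of_bound hmeas.aestronglyMeasurable (2 * t)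
    ((ae_restrict_mem measurableSet_Ico).mono fun _ hx =>
      (norm_apply_le_vnorm _ i).trans (vnorm_czGoodPart_le hg h0 hx))

lemma integral_vnorm_czGoodPart_le (hg : IntegrableOn g (Ico 0 1)) :
    ∫ x in Ico (0 : ℝ) 1, vnorm (czGoodPart g t N x) ≤ ∫ x in Ico (0 : ℝ) 1, vnorm (g x) := by
  have hmeas : ∀ p ∈ czCells g t N, MeasurableSet (dyadicI p.1 p.2) :=
    fun p _ => measurableSet_dyadicI _ _
  have hconst : ∀ p ∈ czCells g t N, EqOn (fun x => vnorm (czGoodPart g t N x))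
      (fun _ => vnorm (⨍ y in dyadicI p.1 p.2, g y)) (dyadicI p.1 p.2) :=
    fun p hp x hx => by simp only [czGoodPart_eq hp hx]
  rw [← biUnion_czCells (g := g) (t := t) (N := N),
    integral_biUnion_finset _ hmeas pairwiseDisjoint_czCells fun p hp =>
      (integrableOn_const (by simp [volume_dyadicI])).congr_fun (hconst p hp).symm (hmeas p hp),
    integral_biUnion_finset _ hmeas pairwiseDisjoint_czCells fun p hp =>
      Integrable.vnorm (hg.mono_set (dyadicI_subset_Ico_zero_one (mem_czCells.1 hp).2.1))]
  refine Finset.sum_le_sum fun p hp => ?_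
  have hlen := (len_dyadicI_pos p.1 p.2).ne'
  rw [setIntegral_congr_fun (hmeas p hp) (hconst p hp), setIntegral_const, smul_eq_mul]
  calc _ ≤ len (dyadicI p.1 p.2) *
        ((len (dyadicI p.1 p.2))⁻¹ * ∫ x in dyadicI p.1 p.2, vnorm (g x)) := by
        rw [← volume_real_dyadicI]; gcongr; exact vnorm_setAverage_le _
    _ = _ := by field_simp

lemma haarCoef_czGoodPart (hg : IntegrableOn g (Ico 0 1)) {n k : ℕ} (hn : n < N)
    (hk : ¬BelowHeavy g t (dyadicI n k)) :
    haarCoef (czGoodPart g t N) (dyadicI n k) = haarCoef g (dyadicI n k) := by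
  rw [haarCoef, haarCoef, ← biUnion_czCells (g := g) (t := t) (N := N)]
  exact setIntegral_smul_stepAverage pairwiseDisjoint_czCells
    (fun p _ => measurableSet_dyadicI _ _) (fun p _ => by simp [volume_dyadicI])
    (fun p hp => hg.mono_set (dyadicI_subset_Ico_zero_one (mem_czCells.1 hp).2.1))
    (fun p hp => exists_haar_dyadicI_eq_const_of_mem_czCells hn hk hp)

lemma sum_vnorm_haarCoef_sq_le_of_not_belowHeavy (hg : IntegrableOn g (Ico 0 1))
    (ht : ∫ x in Ico (0 : ℝ) 1, vnorm (g x) ≤ t) (F : Finset DyadicIndex)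
    (hF : ∀ p ∈ F, ¬BelowHeavy g t (dyadicI p.1 p.2)) :
    ∑ p ∈ F, vnorm (haarCoef g (dyadicI p.1 p.2)) ^ 2
      ≤ 2 * t * ∫ x in Ico (0 : ℝ) 1, vnorm (g x) := by
  set N := F.sup Sigma.fst + 1
  have h0 := not_heavy_zero_zero ht
  have ht0 : 0 ≤ t := (integral_nonneg fun x => vnorm_nonneg _).trans ht
  have hmem := memLp_czGoodPart_apply (N := N) hg h0
  have hint : IntegrableOn (fun x => vnorm (czGoodPart g t N x)) (Ico 0 1) :=
    Integrable.vnorm (Integrable.of_eval fun i => (hmem i).integrable one_le_two)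
  calc ∑ p ∈ F, vnorm (haarCoef g (dyadicI p.1 p.2)) ^ 2
      = ∑ p ∈ F, vnorm (haarCoef (czGoodPart g t N) (dyadicI p.1 p.2)) ^ 2 :=
        Finset.sum_congr rfl fun p hp => by
          rw [haarCoef_czGoodPart hg (Nat.lt_succ_of_le (F.le_sup (f := Sigma.fst) hp)) (hF p hp)]
    _ ≤ ∫ x in Ico (0 : ℝ) 1, vnorm (czGoodPart g t N x) ^ 2 :=
        sum_vnorm_haarCoef_sq_le_integral hmem F
    _ ≤ ∫ x in Ico (0 : ℝ) 1, 2 * t * vnorm (czGoodPart g t N x) :=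
        integral_mono_of_nonneg (Eventually.of_forall fun x => by positivity) (hint.const_mul _)
          ((ae_restrict_mem measurableSet_Ico).mono fun x hx => by
            dsimp only
            rw [sq]
            exact mul_le_mul_of_nonneg_right (vnorm_czGoodPart_le hg h0 hx) (vnorm_nonneg _))
    _ ≤ 2 * t * ∫ x in Ico (0 : ℝ) 1, vnorm (g x) := by
        rw [integral_const_mul]
        exact mul_le_mul_of_nonneg_left (integral_vnorm_czGoodPart_le hg) (by positivity)

end CalderonZygmund

section Packing

open scoped Classical

variable {d : ℕ} {g : ℝ → Fin d → ℂ}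

def sqSumAbove (g : ℝ → Fin d → ℂ) (I : Set ℝ) : ℝ :=
  ∑' (n : ℕ) (k : Fin (2 ^ n)),
    if I ⊆ dyadicI n k then vnorm (haarCoef g (dyadicI n k)) ^ 2 / len (dyadicI n k) else 0

lemma sqSumAbove_term_nonneg (I : Set ℝ) (n k : ℕ) :
    0 ≤ if I ⊆ dyadicI n k then vnorm (haarCoef g (dyadicI n k)) ^ 2 / len (dyadicI n k)
      else 0 := by
  split_ifs
  exacts [div_nonneg (sq_nonneg _) (len_dyadicI_pos n k).le, le_rfl]

lemma ofReal_sqSumAbove_le {I : Set ℝ} {x : ℝ} (hx : x ∈ I) :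
    ENNReal.ofReal (sqSumAbove g I) ≤ ∑' (n : ℕ) (k : Fin (2 ^ n)),
      ENNReal.ofReal (vnorm (haarCoef g (dyadicI n k)) ^ 2 *
        (dyadicI n k).indicator (fun _ => (1 : ℝ)) x / len (dyadicI n k)) := by
  refine (ofReal_tsum_le_tsum_ofReal fun _ => tsum_nonneg fun _ =>
    sqSumAbove_term_nonneg I _ _).trans
    (ENNReal.tsum_le_tsum fun n => (ofReal_tsum_le_tsum_ofReal fun k =>
      sqSumAbove_term_nonneg I _ _).trans (ENNReal.tsum_le_tsum fun k => ?_))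
  refine ENNReal.ofReal_le_ofReal ?_
  split_ifs with h
  · rw [indicator_of_mem (h hx), mul_one]
  · exact div_nonneg (mul_nonneg (sq_nonneg _) (indicator_nonneg (fun _ _ => zero_le_one) x))
      (len_dyadicI_pos n k).le

lemma ofReal_sqSumAbove_le_tsum (I : Set ℝ) :
    ENNReal.ofReal (sqSumAbove g I) ≤ ∑' p : DyadicIndex, if I ⊆ dyadicI p.1 p.2 then
      ENNReal.ofReal (vnorm (haarCoef g (dyadicI p.1 p.2)) ^ 2 / len (dyadicI p.1 p.2)) else 0 := by
  refine (ofReal_tsum_le_tsum_ofReal fun _ => tsum_nonneg fun _ =>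
    sqSumAbove_term_nonneg I _ _).trans
    ((ENNReal.tsum_le_tsum fun n => ofReal_tsum_le_tsum_ofReal fun k =>
      sqSumAbove_term_nonneg I _ _).trans_eq ?_)
  rw [ENNReal.tsum_sigma']
  refine tsum_congr fun n => tsum_congr fun k => ?_
  split_ifs <;> simp

variable {t : ℝ}

lemma tsum_ofReal_vnorm_haarCoef_sq_le (hg : IntegrableOn g (Ico 0 1))
    (ht : ∫ x in Ico (0 : ℝ) 1, vnorm (g x) ≤ t) :
    ∑' p : DyadicIndex, (if ¬BelowHeavy g t (dyadicI p.1 p.2) then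
        ENNReal.ofReal (vnorm (haarCoef g (dyadicI p.1 p.2)) ^ 2) else 0)
      ≤ ENNReal.ofReal (2 * t * ∫ x in Ico (0 : ℝ) 1, vnorm (g x)) := by
  classical
  rw [ENNReal.tsum_eq_iSup_sum]
  refine iSup_le fun F => ?_
  rw [← Finset.sum_filter, ← ENNReal.ofReal_sum_of_nonneg fun _ _ => by positivity]
  exact ENNReal.ofReal_le_ofReal (sum_vnorm_haarCoef_sq_le_of_not_belowHeavy hg ht _
    fun p hp => (Finset.mem_filter.1 hp).2)

lemma ofReal_mul_volume_biUnion_le (hg : IntegrableOn g (Ico 0 1))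
    (ht : ∫ x in Ico (0 : ℝ) 1, vnorm (g x) ≤ t) {L : Set (Set ℝ)} (hLd : ∀ I ∈ L, IsDyadic I)
    (hLdisj : L.PairwiseDisjoint id) (hgood : ∀ I ∈ L, ¬BelowHeavy g t I) {τ : ℝ}
    (hτ : ∀ I ∈ L, τ ≤ sqSumAbove g I) :
    ENNReal.ofReal τ * volume (⋃ I ∈ L, I)
      ≤ ENNReal.ofReal (2 * t * ∫ x in Ico (0 : ℝ) 1, vnorm (g x)) := by
  rw [measure_biUnion (f := fun I => I) (countable_of_isDyadic hLd) hLdisj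
    fun I hI => (hLd I hI).measurableSet]
  set c : DyadicIndex → ℝ≥0∞ := fun p =>
    ENNReal.ofReal (vnorm (haarCoef g (dyadicI p.1 p.2)) ^ 2 / len (dyadicI p.1 p.2))
  have hsum : ∀ p : DyadicIndex, ∑' I : L, (if (I : Set ℝ) ⊆ dyadicI p.1 p.2 then c p else 0) *
      volume (I : Set ℝ) ≤ if ¬BelowHeavy g t (dyadicI p.1 p.2) then
        ENNReal.ofReal (vnorm (haarCoef g (dyadicI p.1 p.2)) ^ 2) else 0 := by
    intro p
    by_cases hp : BelowHeavy g t (dyadicI p.1 p.2)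
    · rw [if_neg (not_not.2 hp)]
      refine le_of_eq (ENNReal.tsum_eq_zero.2 fun I => ?_)
      rw [if_neg fun hI => hgood I I.2 (hp.imp fun m ⟨j, h, hh⟩ => ⟨j, hI.trans h, hh⟩), zero_mul]
    · rw [if_pos hp]
      refine (tsum_ite_subset_mul_measure_le (countable_of_isDyadic hLd) hLdisj
        (fun I hI => (hLd I hI).measurableSet) (measurableSet_dyadicI _ _) _).trans_eq ?_
      rw [← ofReal_len_dyadicI, ← ENNReal.ofReal_mul
        (div_nonneg (sq_nonneg _) (len_dyadicI_pos _ _).le),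
        div_mul_cancel₀ _ (len_dyadicI_pos _ _).ne']
  calc ENNReal.ofReal τ * ∑' I : L, volume (I : Set ℝ)
      = ∑' I : L, ENNReal.ofReal τ * volume (I : Set ℝ) := ENNReal.tsum_mul_left.symm
    _ ≤ ∑' I : L, (∑' p : DyadicIndex, if (I : Set ℝ) ⊆ dyadicI p.1 p.2 then c p else 0) *
          volume (I : Set ℝ) := ENNReal.tsum_le_tsum fun I => by
        gcongr
        exact (ENNReal.ofReal_le_ofReal (hτ I I.2)).trans (ofReal_sqSumAbove_le_tsum I)
    _ = ∑' p : DyadicIndex, ∑' I : L, (if (I : Set ℝ) ⊆ dyadicI p.1 p.2 then c p else 0) *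
          volume (I : Set ℝ) := by
        simp_rw [← ENNReal.tsum_mul_right]
        exact ENNReal.tsum_comm
    _ ≤ _ := (ENNReal.tsum_le_tsum hsum).trans (tsum_ofReal_vnorm_haarCoef_sq_le hg ht)

lemma biUnion_subset_maximalHeavy_union {L : Set (Set ℝ)} (hLd : ∀ I ∈ L, IsDyadic I) :
    ⋃ I ∈ L, I ⊆
      (⋃ p ∈ {p : ℕ × ℕ | p.2 < 2 ^ p.1 ∧ MaximalHeavy g t p.1 p.2}, dyadicI p.1 p.2) ∪
        ⋃ I ∈ {I ∈ L | ¬BelowHeavy g t I}, I := by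
  refine iUnion₂_subset fun I hI => ?_
  by_cases hb : BelowHeavy g t I
  · obtain ⟨m, j, hsub, hheavy⟩ := hb
    obtain ⟨n, k, hk, rfl⟩ := hLd I hI
    obtain ⟨m', j', hj', hsub', hmax⟩ :=
      exists_maximalHeavy (lt_two_pow_of_dyadicI_subset hk hsub) hheavy
    exact fun x hx => Or.inl (mem_iUnion₂.2 ⟨(m', j'), ⟨hj', hmax⟩, hsub' (hsub hx)⟩)
  · exact fun x hx => Or.inr (mem_iUnion₂.2 ⟨I, ⟨hI, hb⟩, hx⟩)

lemma tsum_volume_le_of_forall_lt_sqSumAbove (hg : IntegrableOn g (Ico 0 1))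
    (hA : 0 < ∫ x in Ico (0 : ℝ) 1, vnorm (g x)) {lam : ℝ} (hlam : 0 < lam) {L : Set (Set ℝ)}
    (hLd : ∀ I ∈ L, IsDyadic I) (hLdisj : L.PairwiseDisjoint id)
    (hL : ∀ I ∈ L, lam ^ 2 * (∫ x in Ico (0 : ℝ) 1, vnorm (g x)) ^ 2 < sqSumAbove g I) :
    ∑' I : L, volume (I : Set ℝ) ≤ ENNReal.ofReal (3 * lam⁻¹) := by
  set A := ∫ x in Ico (0 : ℝ) 1, vnorm (g x)
  rw [← measure_biUnion (f := fun I => I) (countable_of_isDyadic hLd) hLdisj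
    fun I hI => (hLd I hI).measurableSet]
  rcases lt_or_ge lam 1 with hlam1 | hlam1
  · calc volume (⋃ I ∈ L, I) ≤ volume (Ico (0 : ℝ) 1) :=
          measure_mono (iUnion₂_subset fun I hI => (hLd I hI).subset_Ico_zero_one)
      _ ≤ ENNReal.ofReal (3 * lam⁻¹) := by
          rw [Real.volume_Ico, sub_zero, ← div_eq_mul_inv]
          exact ENNReal.ofReal_le_ofReal ((le_div_iff₀ hlam).2 (by linarith))
  have hbad := le_ofReal_div_of_ofReal_mul_le (by positivity)
    (ofReal_mul_volume_maximalHeavy_le (t := lam * A) hg)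
  have hgood := le_ofReal_div_of_ofReal_mul_le (by positivity)
    (ofReal_mul_volume_biUnion_le hg (le_mul_of_one_le_left hA.le hlam1)
      (fun I hI => hLd I hI.1) (hLdisj.subset (sep_subset L _)) (fun I hI => hI.2)
      (τ := lam ^ 2 * A ^ 2) fun I hI => (hL I hI.1).le)
  calc volume (⋃ I ∈ L, I) ≤ _ :=
        (measure_mono (biUnion_subset_maximalHeavy_union hLd)).trans (measure_union_le _ _)
    _ ≤ ENNReal.ofReal (A / (lam * A)) + ENNReal.ofReal (2 * (lam * A) * A / (lam ^ 2 * A ^ 2)) :=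
        add_le_add hbad hgood
    _ = ENNReal.ofReal (3 * lam⁻¹) := by
        rw [← ENNReal.ofReal_add (by positivity) (by positivity)]
        congr 1
        field_simp
        ring

end Packing

open scoped Classical in
/-- **Packing of the second stopping condition.** There is an absolute constant `C`
(independent of `d`) such that: if `g ∈ L¹(J; ℂ^d)` with `∫_J ‖g‖ > 0`, `λ > 0`, and `{L}`
is a collection of pairwise disjoint dyadic subintervals of `J` each satisfying
`∑_{I ∈ D : L ⊆ I ⊆ J} ‖(g,h_I)‖²/|I| > λ² ⟨‖g‖⟩_J²`, then each such `L` is contained in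
`{x ∈ J : (Sg(x))² > λ² ⟨‖g‖⟩_J²}` and `∑_L |L| ≤ C λ⁻¹ |J|`. -/
theorem second_stopping_condition_packing :
    ∃ C : ℝ, 0 < C ∧
      ∀ (d : ℕ) (g : ℝ → Fin d → ℂ), IntegrableOn g (Set.Ico (0 : ℝ) 1) →
        0 < ∫ y in Set.Ico (0 : ℝ) 1, vnorm (g y) →
        ∀ lam : ℝ, 0 < lam →
          ∀ L : Set (Set ℝ), (∀ I ∈ L, IsDyadic I) → L.PairwiseDisjoint id →
            (∀ I₀ ∈ L,
              lam ^ 2 *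
                  ((len (Set.Ico (0 : ℝ) 1))⁻¹ * ∫ y in Set.Ico (0 : ℝ) 1, vnorm (g y)) ^ 2 <
                ∑' (n : ℕ) (k : Fin (2 ^ n)),
                  if I₀ ⊆ dyadicI n (k : ℕ) then
                    vnorm (haarCoef g (dyadicI n (k : ℕ))) ^ 2 / len (dyadicI n (k : ℕ))
                  else 0) →
            (∀ I₀ ∈ L,
              I₀ ⊆ {x ∈ Set.Ico (0 : ℝ) 1 |
                ENNReal.ofReal (lam ^ 2 *
                    ((len (Set.Ico (0 : ℝ) 1))⁻¹ * ∫ y in Set.Ico (0 : ℝ) 1, vnorm (g y)) ^ 2) <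
                  ∑' (n : ℕ) (k : Fin (2 ^ n)),
                    ENNReal.ofReal (vnorm (haarCoef g (dyadicI n (k : ℕ))) ^ 2 *
                      (dyadicI n (k : ℕ)).indicator (fun _ => (1 : ℝ)) x /
                        len (dyadicI n (k : ℕ)))}) ∧
            (∑' I : L, volume (I : Set ℝ))
              ≤ ENNReal.ofReal (C * lam⁻¹ * len (Set.Ico (0 : ℝ) 1)) := by
  refine ⟨3, by norm_num, fun d g hg hA lam hlam L hLd hLdisj hL =>
    ⟨fun I hI x hx => ⟨(hLd I hI).subset_Ico_zero_one hx, ?_⟩, ?_⟩⟩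
  · exact ((ENNReal.ofReal_lt_ofReal_iff_of_nonneg (by positivity)).2 (hL I hI)).trans_le
      (ofReal_sqSumAbove_le hx)
  · simp only [len_Ico_zero_one, inv_one, one_mul, mul_one] at hL ⊢
    exact tsum_volume_le_of_forall_lt_sqSumAbove hg hA hlam hLd hLdisj hL
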